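/- Let (Ω, μ) be a measure space, let θ > 0, ε ∈ (0,1), and let ρ, c : Ω → ℝ be measurable with ρ ≥ 0 μ-a.e. Then the (extended-real-valued Lebesgue) integrals satisfy ∫ ρ·(max(|c|−1, 0))² dμ ≤ (ε(2−ε)/θ)² · ∫ ρ·(F_ε'(c))² dμ. -/

import Mathlib

open Real Set Filter MeasureTheory

/-- The Flory–Huggins potential. -/
noncomputable def FH (θ s : ℝ) : ℝ :=
  (θ / 2) * ((1 + s) * Real.log (1 + s) + (1 - s) * Real.log (1 - s))

/-- Its first derivative on `(-1,1)`. -/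
noncomputable def FH' (θ s : ℝ) : ℝ :=
  (θ / 2) * Real.log ((1 + s) / (1 - s))

/-- The regularized (quadratic extension) Flory–Huggins potential `F_ε`.
Note that `F''(±(1-ε)) = θ/(ε(2-ε))`. -/
noncomputable def FHreg (θ ε s : ℝ) : ℝ :=
  if 1 - ε < s then
    FH θ (1 - ε) + FH' θ (1 - ε) * (s - (1 - ε))
      + (1 / 2) * (θ / (ε * (2 - ε))) * (s - (1 - ε)) ^ 2
  else if s < -1 + ε then
    FH θ (-1 + ε) + FH' θ (-1 + ε) * (s - (-1 + ε))
      + (1 / 2) * (θ / (ε * (2 - ε))) * (s - (-1 + ε)) ^ 2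
  else FH θ s

open Topology

/-! Outside `[-1 + ε, 1 - ε]` the derivative `F_ε'` is affine with slope `θ / (ε (2 - ε))`, and its
value at the breakpoint `±(1 - ε)` is `F'(±(1 - ε))`, which has the sign of `±1`. Hence
`|F_ε'(s)| ≥ θ / (ε (2 - ε)) · (|s| - 1)` whenever `|s| > 1`; square, multiply by `ρ ≥ 0` and
integrate. -/

lemma hasDerivAt_quadratic (A B C a s : ℝ) :
    HasDerivAt (fun x => A + B * (x - a) + (1 / 2) * C * (x - a) ^ 2) (B + C * (s - a)) s := by
  have h : HasDerivAt (fun x : ℝ => x - a) 1 s := (hasDerivAt_id s).sub_const a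
  refine (((h.const_mul B).const_add A).add ((h.pow 2).const_mul ((1 / 2) * C))).congr_deriv ?_
  norm_num
  ring

lemma FH'_neg (θ s : ℝ) : FH' θ (-s) = -FH' θ s := by
  rw [FH', FH', ← mul_neg, ← Real.log_inv, inv_div]
  ring_nf

lemma FH'_nonneg {θ s : ℝ} (hθ : 0 ≤ θ) (hs0 : 0 ≤ s) (hs1 : s < 1) : 0 ≤ FH' θ s :=
  mul_nonneg (by linarith) <| Real.log_nonneg <| (one_le_div (by linarith)).mpr (by linarith)

lemma deriv_FHreg_of_gt {θ ε s : ℝ} (h : 1 - ε < s) :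
    deriv (FHreg θ ε) s = FH' θ (1 - ε) + θ / (ε * (2 - ε)) * (s - (1 - ε)) := by
  have hev : FHreg θ ε =ᶠ[𝓝 s] fun x => FH θ (1 - ε) + FH' θ (1 - ε) * (x - (1 - ε))
      + (1 / 2) * (θ / (ε * (2 - ε))) * (x - (1 - ε)) ^ 2 := by
    filter_upwards [Ioi_mem_nhds h] with x (hx : 1 - ε < x)
    rw [FHreg, if_pos hx]
  rw [hev.deriv_eq]
  exact (hasDerivAt_quadratic _ _ _ _ _).deriv

lemma deriv_FHreg_of_lt {θ ε s : ℝ} (hε : ε ≤ 1) (h : s < -1 + ε) :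
    deriv (FHreg θ ε) s = FH' θ (-1 + ε) + θ / (ε * (2 - ε)) * (s - (-1 + ε)) := by
  have hev : FHreg θ ε =ᶠ[𝓝 s] fun x => FH θ (-1 + ε) + FH' θ (-1 + ε) * (x - (-1 + ε))
      + (1 / 2) * (θ / (ε * (2 - ε))) * (x - (-1 + ε)) ^ 2 := by
    filter_upwards [Iio_mem_nhds h] with x (hx : x < -1 + ε)
    rw [FHreg, if_neg (by linarith), if_pos hx]
  rw [hev.deriv_eq]
  exact (hasDerivAt_quadratic _ _ _ _ _).deriv

section

variable {θ ε : ℝ} (hθ : 0 < θ) (hε₀ : 0 < ε) (hε₁ : ε < 1)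
include hθ hε₀ hε₁

lemma mul_sub_one_le_deriv_FHreg {s : ℝ} (hs : 1 < s) :
    θ / (ε * (2 - ε)) * (s - 1) ≤ deriv (FHreg θ ε) s := by
  have hslope : 0 ≤ θ / (ε * (2 - ε)) := div_nonneg hθ.le (by nlinarith)
  rw [deriv_FHreg_of_gt (by linarith)]
  nlinarith [FH'_nonneg hθ.le (by linarith : (0 : ℝ) ≤ 1 - ε) (by linarith)]

lemma deriv_FHreg_le_mul_add_one {s : ℝ} (hs : s < -1) :
    deriv (FHreg θ ε) s ≤ θ / (ε * (2 - ε)) * (s + 1) := by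
  have hslope : 0 ≤ θ / (ε * (2 - ε)) := div_nonneg hθ.le (by nlinarith)
  rw [deriv_FHreg_of_lt hε₁.le (by linarith), show -1 + ε = -(1 - ε) by ring, FH'_neg]
  nlinarith [FH'_nonneg hθ.le (by linarith : (0 : ℝ) ≤ 1 - ε) (by linarith)]

lemma max_abs_sub_one_le_mul_abs_deriv_FHreg (s : ℝ) :
    max (|s| - 1) 0 ≤ ε * (2 - ε) / θ * |deriv (FHreg θ ε) s| := by
  have h2ε : 0 < 2 - ε := by linarith
  refine max_le ?_ (by positivity)
  rcases le_or_gt |s| 1 with hs | hs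
  · linarith [show 0 ≤ ε * (2 - ε) / θ * |deriv (FHreg θ ε) s| by positivity]
  have hslope : θ / (ε * (2 - ε)) * (|s| - 1) ≤ |deriv (FHreg θ ε) s| := by
    rcases lt_abs.mp hs with hs | hs
    · rw [abs_of_pos (by linarith : 0 < s)]
      exact (mul_sub_one_le_deriv_FHreg hθ hε₀ hε₁ hs).trans (le_abs_self _)
    · rw [abs_of_neg (by linarith : s < 0)]
      have := deriv_FHreg_le_mul_add_one hθ hε₀ hε₁ (by linarith : s < -1)
      calc θ / (ε * (2 - ε)) * (-s - 1) = -(θ / (ε * (2 - ε)) * (s + 1)) := by ring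
        _ ≤ -deriv (FHreg θ ε) s := neg_le_neg this
        _ ≤ |deriv (FHreg θ ε) s| := neg_le_abs _
  calc |s| - 1 = ε * (2 - ε) / θ * (θ / (ε * (2 - ε)) * (|s| - 1)) := by field_simp
    _ ≤ ε * (2 - ε) / θ * |deriv (FHreg θ ε) s| := by gcongr

end

lemma lintegral_ofReal_mul_le_ofReal_mul_lintegral {Ω : Type*} [MeasurableSpace Ω]
    {μ : Measure Ω} {ρ f g : Ω → ℝ} {K : ℝ} (hρ : ∀ᵐ x ∂μ, 0 ≤ ρ x) (hK : 0 ≤ K)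
    (hfg : ∀ᵐ x ∂μ, f x ≤ K * g x) :
    ∫⁻ x, ENNReal.ofReal (ρ x * f x) ∂μ ≤
      ENNReal.ofReal K * ∫⁻ x, ENNReal.ofReal (ρ x * g x) ∂μ := by
  rw [← lintegral_const_mul' _ _ ENNReal.ofReal_ne_top]
  refine lintegral_mono_ae ?_
  filter_upwards [hρ, hfg] with x hρx hfgx
  rw [← ENNReal.ofReal_mul hK]
  exact ENNReal.ofReal_le_ofReal <| by nlinarith [mul_le_mul_of_nonneg_left hfgx hρx]

theorem excess_concentration_bound_general (θ ε : ℝ) (hθ : 0 < θ) (hε : ε ∈ Set.Ioo (0 : ℝ) 1)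
    {Ω : Type*} [MeasurableSpace Ω] (μ : Measure Ω)
    (ρ c : Ω → ℝ) (hρ0 : ∀ᵐ x ∂μ, 0 ≤ ρ x) :
    ∫⁻ x, ENNReal.ofReal (ρ x * max (|c x| - 1) 0 ^ 2) ∂μ ≤
      ENNReal.ofReal ((ε * (2 - ε) / θ) ^ 2) *
        ∫⁻ x, ENNReal.ofReal (ρ x * deriv (FHreg θ ε) (c x) ^ 2) ∂μ := by
  obtain ⟨hε₀, hε₁⟩ := hε
  refine lintegral_ofReal_mul_le_ofReal_mul_lintegral hρ0 (sq_nonneg _) (.of_forall fun x => ?_)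
  calc max (|c x| - 1) 0 ^ 2 ≤ (ε * (2 - ε) / θ * |deriv (FHreg θ ε) (c x)|) ^ 2 :=
        pow_le_pow_left₀ (le_max_right _ _)
          (max_abs_sub_one_le_mul_abs_deriv_FHreg hθ hε₀ hε₁ _) 2
    _ = (ε * (2 - ε) / θ) ^ 2 * deriv (FHreg θ ε) (c x) ^ 2 := by rw [mul_pow, sq_abs]

theorem excess_concentration_bound (θ ε : ℝ) (hθ : 0 < θ) (hε : ε ∈ Set.Ioo (0 : ℝ) 1)
    {Ω : Type*} [MeasurableSpace Ω] (μ : Measure Ω)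
    (ρ c : Ω → ℝ) (hρ : Measurable ρ) (hc : Measurable c)
    (hρ0 : ∀ᵐ x ∂μ, 0 ≤ ρ x) :
    ∫⁻ x, ENNReal.ofReal (ρ x * max (|c x| - 1) 0 ^ 2) ∂μ ≤
      ENNReal.ofReal ((ε * (2 - ε) / θ) ^ 2) *
        ∫⁻ x, ENNReal.ofReal (ρ x * deriv (FHreg θ ε) (c x) ^ 2) ∂μ :=
  excess_concentration_bound_general θ ε hθ hε μ ρ c hρ0
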